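/- For every n ≥ 1, the proportion of traffic through the root of T_n satisfies p_n(root) = ((k_1−1)/k_1)·((N(n)−1)/N(n)) + 2/N(n), and consequently p_n(root) → 1 − 1/k_1 as n → ∞. -/

import Mathlib

/-! The root lies on the path between distinct vertices `u` and `w` exactly when they have no
common first letter, i.e. when `u.head? ≠ w.head?` (the root has no first letter). So the traffic
through the root is `C(N, 2)` minus the number of pairs inside one class of `head?`. These classes
are the root and `k₁` copies of the tree `T_{n-1}` of the shifted sequence `(k₂, k₃, …)`, of size
`M` say, so `N = 1 + k₁ M` and `l_n(root) = C(N, 2) - k₁ C(M, 2)`, which rearranges to the formula.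
The limit follows because `N → ∞` when every `k_i ≥ 1`. -/

open Finset Filter

namespace TreeTraffic

/-- `beta k l = k 1 * k 2 * ⋯ * k l`, with `beta k 0 = 1`. -/
def beta (k : ℕ → ℕ) (l : ℕ) : ℕ := ∏ i ∈ Finset.range l, k (i + 1)

/-- `Ncard k n = ∑_{l=0}^n beta k l`, the number of vertices of `T_n`. -/
def Ncard (k : ℕ → ℕ) (n : ℕ) : ℕ := ∑ l ∈ Finset.range (n + 1), beta k l

/-- The set of admissible sequences of length exactly `m`:
vertices at depth `m`, i.e. lists `[x_1, …, x_m]` with `x_i ∈ {1, …, k i}`. -/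
def level (k : ℕ → ℕ) : ℕ → Finset (List ℕ)
  | 0 => {[]}
  | m + 1 => (level k m).biUnion (fun l => (Finset.Icc 1 (k (m + 1))).image (fun x => l ++ [x]))

/-- The vertex set of the truncated tree `T_n`: all admissible sequences of length `≤ n`. -/
def T (k : ℕ → ℕ) (n : ℕ) : Finset (List ℕ) :=
  (Finset.range (n + 1)).biUnion (level k)

/-- Length of the longest common prefix of two lists. -/
def lcp : List ℕ → List ℕ → ℕ
  | a :: as, b :: bs => if a = b then lcp as bs + 1 else 0
  | _, _ => 0

/-- The graph distance between two vertices of the tree. -/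
def treeDist (u w : List ℕ) : ℕ := (u.length - lcp u w) + (w.length - lcp u w)

/-- `v` lies on the (unique) geodesic path joining `u` and `w` in the tree. -/
def onPath (v u w : List ℕ) : Prop := treeDist u v + treeDist v w = treeDist u w

instance (v u w : List ℕ) : Decidable (onPath v u w) := by
  unfold onPath; infer_instance

/-- The traffic through `v` in `T_n`: the number of unordered pairs `{u, w}` of distinct
vertices of `T_n` such that `v` lies on the unique path joining `u` and `w`. -/
def traffic (k : ℕ → ℕ) (n : ℕ) (v : List ℕ) : ℕ :=
  (((T k n).powersetCard 2).filter
    (fun s => ∃ u ∈ s, ∃ w ∈ s, u ≠ w ∧ onPath v u w)).card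

/-- The proportion of the traffic of `T_n` passing through `v`:
`p_n(v) = l_n(v) / (N (N - 1) / 2)`. -/
noncomputable def trafficProp (k : ℕ → ℕ) (n : ℕ) (v : List ℕ) : ℝ :=
  (traffic k n v : ℝ) / ((Ncard k n : ℝ) * ((Ncard k n : ℝ) - 1) / 2)



section PowersetCard

variable {α β : Type*} [DecidableEq α] [DecidableEq β]

theorem _root_.Finset.card_powersetCard_filter_forall_eq {s : Finset α} {B : Finset β}
    {f : α → β} (hf : ∀ a ∈ s, f a ∈ B) {k : ℕ} (hk : k ≠ 0) :
    #{t ∈ s.powersetCard k | ∀ u ∈ t, ∀ w ∈ t, f u = f w} =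
      ∑ b ∈ B, (#{a ∈ s | f a = b}).choose k := by
  have hsplit : {t ∈ s.powersetCard k | ∀ u ∈ t, ∀ w ∈ t, f u = f w} =
      B.biUnion fun b => {a ∈ s | f a = b}.powersetCard k := by
    ext t
    simp only [mem_filter, mem_powersetCard, mem_biUnion, subset_iff]
    constructor
    · rintro ⟨⟨hts, rfl⟩, hconst⟩
      obtain ⟨u, hu⟩ := card_ne_zero.mp hk
      exact ⟨f u, hf u (hts hu), fun w hw => ⟨hts hw, hconst w hw u hu⟩, rfl⟩
    · rintro ⟨b, -, hts, rfl⟩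
      exact ⟨⟨fun a ha => (hts ha).1, rfl⟩, fun u hu w hw => (hts hu).2.trans (hts hw).2.symm⟩
  rw [hsplit, card_biUnion]
  · simp only [card_powersetCard]
  · intro b _ c _ hbc
    refine disjoint_left.mpr fun t hb hc => ?_
    obtain ⟨u, hu⟩ := card_ne_zero.mp ((mem_powersetCard.mp hb).2.trans_ne hk)
    exact hbc (((mem_filter.mp ((mem_powersetCard.mp hb).1 hu)).2).symm.trans
      (mem_filter.mp ((mem_powersetCard.mp hc).1 hu)).2)

end PowersetCard

theorem lcp_le_length : ∀ u w : List ℕ, lcp u w ≤ u.length ∧ lcp u w ≤ w.length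
  | a :: as, b :: bs => by
    have := lcp_le_length as bs
    simp only [lcp, List.length_cons]
    split_ifs <;> omega
  | [], _ => by simp [lcp]
  | _ :: _, [] => by simp [lcp]

theorem onPath_nil_iff (u w : List ℕ) : onPath [] u w ↔ lcp u w = 0 := by
  have := lcp_le_length u w
  have hnil : ∀ v, lcp v [] = 0 ∧ lcp [] v = 0 := fun v => by cases v <;> simp [lcp]
  simp only [onPath, treeDist, (hnil u).1, (hnil w).2, List.length_nil]
  omega

theorem ne_and_onPath_nil_iff (u w : List ℕ) : u ≠ w ∧ onPath [] u w ↔ u.head? ≠ w.head? := by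
  rw [onPath_nil_iff]
  cases u <;> cases w <;> grind [lcp]

section Tree

variable {k : ℕ → ℕ}

theorem nil_not_mem_level_succ (m : ℕ) : [] ∉ level k (m + 1) := by
  simp [level]

theorem cons_mem_level_succ_iff {m a : ℕ} {t : List ℕ} :
    a :: t ∈ level k (m + 1) ↔ a ∈ Icc 1 (k 1) ∧ t ∈ level (fun i => k (i + 1)) m := by
  induction m generalizing a t with
  | zero => simp [level, and_comm]
  | succ m ih =>
    rw [level]
    simp only [mem_biUnion, mem_image]
    constructor
    · rintro ⟨_ | ⟨b, s⟩, hl, y, hy, he⟩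
      · exact absurd hl (nil_not_mem_level_succ m)
      · obtain ⟨rfl, rfl⟩ := List.cons_eq_cons.mp he
        obtain ⟨ha, hs⟩ := ih.mp hl
        exact ⟨ha, by rw [level]; exact mem_biUnion.mpr ⟨s, hs, mem_image.mpr ⟨y, hy, rfl⟩⟩⟩
    · rintro ⟨ha, ht⟩
      rw [level] at ht
      obtain ⟨s, hs, y, hy, rfl⟩ := by simpa only [mem_biUnion, mem_image] using ht
      exact ⟨a :: s, ih.mpr ⟨ha, hs⟩, y, hy, rfl⟩

theorem nil_mem_T (n : ℕ) : [] ∈ T k n :=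
  mem_biUnion.mpr ⟨0, by simp, by simp [level]⟩

theorem cons_mem_T_succ_iff {n a : ℕ} {t : List ℕ} :
    a :: t ∈ T k (n + 1) ↔ a ∈ Icc 1 (k 1) ∧ t ∈ T (fun i => k (i + 1)) n := by
  simp only [T, mem_biUnion, mem_range]
  constructor
  · rintro ⟨_ | m, hm, hl⟩
    · simp [level] at hl
    · exact (cons_mem_level_succ_iff.mp hl).imp_right fun ht => ⟨m, by omega, ht⟩
  · rintro ⟨ha, m, hm, ht⟩
    exact ⟨m + 1, by omega, cons_mem_level_succ_iff.mpr ⟨ha, ht⟩⟩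

theorem head?_mem_insertNone {n : ℕ} {u : List ℕ} (hu : u ∈ T k n) :
    u.head? ∈ insertNone (Icc 1 (k 1)) := by
  cases u with
  | nil => simp
  | cons a t =>
    cases n with
    | zero => simp [T, level] at hu
    | succ n => simpa using (cons_mem_T_succ_iff.mp hu).1

theorem filter_head?_eq_none (n : ℕ) : {u ∈ T k n | u.head? = none} = {[]} := by
  ext u
  cases u <;> simp [nil_mem_T]

theorem card_filter_head?_eq_some {n x : ℕ} (hx : x ∈ Icc 1 (k 1)) :
    #{u ∈ T k (n + 1) | u.head? = some x} = #(T (fun i => k (i + 1)) n) := by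
  have hfiber :
      {u ∈ T k (n + 1) | u.head? = some x} = (T (fun i => k (i + 1)) n).image (x :: ·) := by
    ext u
    cases u <;> grind [cons_mem_T_succ_iff]
  rw [hfiber, card_image_of_injective _ List.cons_injective]

theorem sum_insertNone_card_filter_head? (g : ℕ → ℕ) (n : ℕ) :
    ∑ b ∈ insertNone (Icc 1 (k 1)), g #{u ∈ T k (n + 1) | u.head? = b} =
      g 1 + k 1 * g #(T (fun i => k (i + 1)) n) := by
  rw [sum_insertNone, filter_head?_eq_none, card_singleton,
    sum_congr rfl fun x hx => by rw [card_filter_head?_eq_some hx], sum_const, Nat.card_Icc,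
    smul_eq_mul, Nat.add_sub_cancel]

theorem card_T_succ (n : ℕ) : #(T k (n + 1)) = 1 + k 1 * #(T (fun i => k (i + 1)) n) :=
  (card_eq_sum_card_fiberwise fun _ => head?_mem_insertNone).trans
    (sum_insertNone_card_filter_head? id n)

theorem Ncard_succ (n : ℕ) : Ncard k (n + 1) = 1 + k 1 * Ncard (fun i => k (i + 1)) n := by
  simp only [Ncard, beta, sum_range_succ' _ (n + 1), prod_range_succ', mul_sum]
  simp [mul_comm, add_comm]

theorem card_T (k : ℕ → ℕ) (n : ℕ) : #(T k n) = Ncard k n := by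
  induction n generalizing k with
  | zero => simp [T, level, Ncard, beta]
  | succ n ih => rw [card_T_succ, Ncard_succ, ih]

end Tree

theorem traffic_nil_succ_add (k : ℕ → ℕ) (n : ℕ) :
    traffic k (n + 1) [] + k 1 * (Ncard (fun i => k (i + 1)) n).choose 2 =
      (Ncard k (n + 1)).choose 2 := by
  have hsplit : traffic k (n + 1) [] =
      #{t ∈ (T k (n + 1)).powersetCard 2 | ¬ ∀ u ∈ t, ∀ w ∈ t, u.head? = w.head?} := by
    simp only [traffic, ne_and_onPath_nil_iff, not_forall, exists_prop]
  have hsame := (card_powersetCard_filter_forall_eq (s := T k (n + 1)) (f := List.head?)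
    (fun _ => head?_mem_insertNone) two_ne_zero).trans
    (sum_insertNone_card_filter_head? (·.choose 2) n)
  have htotal := card_filter_add_card_filter_not (s := (T k (n + 1)).powersetCard 2)
    fun t => ∀ u ∈ t, ∀ w ∈ t, u.head? = w.head?
  rw [hsame, ← hsplit, card_powersetCard, card_T, card_T,
    Nat.choose_eq_zero_of_lt one_lt_two] at htotal
  omega

theorem trafficProp_nil {k : ℕ → ℕ} (hk1 : 1 ≤ k 1) {n : ℕ} (hn : 1 ≤ n) :
    trafficProp k n [] =
      (((k 1 : ℝ) - 1) / (k 1 : ℝ)) * (((Ncard k n : ℝ) - 1) / (Ncard k n : ℝ)) +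
        2 / (Ncard k n : ℝ) := by
  obtain ⟨n, rfl⟩ := Nat.exists_eq_add_of_le' hn
  have hM : 0 < Ncard (fun i => k (i + 1)) n := card_T _ n ▸ card_pos.mpr ⟨[], nil_mem_T n⟩
  set M := Ncard (fun i => k (i + 1)) n
  have hN : (Ncard k (n + 1) : ℝ) = 1 + k 1 * M := by exact_mod_cast Ncard_succ n
  have htraffic : (traffic k (n + 1) [] : ℝ) =
      Ncard k (n + 1) * (Ncard k (n + 1) - 1) / 2 - k 1 * (M * (M - 1) / 2) := by
    rw [eq_sub_iff_add_eq, ← Nat.cast_choose_two, ← Nat.cast_choose_two]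
    exact_mod_cast traffic_nil_succ_add k n
  rw [trafficProp, htraffic, hN]
  field_simp
  ring

theorem tendsto_Ncard_atTop {k : ℕ → ℕ} (hk : ∀ i, 1 ≤ k i) :
    Tendsto (fun n => (Ncard k n : ℝ)) atTop atTop := by
  refine tendsto_atTop_mono (fun n => ?_) tendsto_natCast_atTop_atTop
  have : n + 1 ≤ Ncard k n := by
    calc n + 1 = ∑ _l ∈ range (n + 1), 1 := by simp
      _ ≤ Ncard k n := sum_le_sum fun l _ => one_le_prod' fun i _ => hk (i + 1)
  exact_mod_cast n.le_succ.trans this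

theorem tendsto_mul_sub_one_div_add_two_div (a : ℝ) :
    Tendsto (fun x : ℝ => a * ((x - 1) / x) + 2 / x) atTop (nhds a) := by
  have hinv := tendsto_inv_atTop_zero (𝕜 := ℝ)
  have hlim : Tendsto (fun x : ℝ => a * (1 - x⁻¹) + 2 * x⁻¹) atTop (nhds (a * (1 - 0) + 2 * 0)) :=
    (tendsto_const_nhds.mul (tendsto_const_nhds.sub hinv)).add (tendsto_const_nhds.mul hinv)
  rw [mul_zero, sub_zero, mul_one, add_zero] at hlim
  refine hlim.congr' ?_
  filter_upwards [eventually_ne_atTop 0] with x hx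
  field_simp

/-- For every `n ≥ 1`, the proportion of traffic through the root of `T_n` equals
`((k₁ - 1)/k₁) ((N-1)/N) + 2/N`; consequently it converges to `1 - 1/k₁` as `n → ∞`. -/
theorem traffic_prop_root (k : ℕ → ℕ) (hk : ∀ i, 1 ≤ k i) :
    (∀ n, 1 ≤ n →
      trafficProp k n [] =
        (((k 1 : ℝ) - 1) / (k 1 : ℝ)) * (((Ncard k n : ℝ) - 1) / (Ncard k n : ℝ)) +
          2 / (Ncard k n : ℝ)) ∧
    Tendsto (fun n => trafficProp k n []) atTop (nhds (1 - 1 / (k 1 : ℝ))) := by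
  have hk1 : (k 1 : ℝ) ≠ 0 := Nat.cast_ne_zero.mpr (Nat.one_le_iff_ne_zero.mp (hk 1))
  have hformula (n : ℕ) (hn : 1 ≤ n) := trafficProp_nil (hk 1) hn
  have hlim := ((tendsto_mul_sub_one_div_add_two_div (((k 1 : ℝ) - 1) / k 1)).comp
    (tendsto_Ncard_atTop hk)).congr' (eventually_atTop.mpr ⟨1, fun n hn => (hformula n hn).symm⟩)
  rw [sub_div, div_self hk1] at hlim
  exact ⟨hformula, hlim⟩

end TreeTraffic
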